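/- Fix d ≥ 1, α > d/2 and f > 0. Define a_j := f·2^{−(d+α)(|j|+1)/3} for j ∈ J. Then Σ_{j∈J} a_j² < ∞ and c_j a_ȷ̄² = a_j Σ_{k∈O_j} c_k a_k for every j ∈ J (with the root convention a_{∅̄} = f); consequently the constant functions X_j(t) ≡ a_j form a Leray solution of the forced inviscid KP tree model with forcing f. -/

import Mathlib

/-! Writing `q = 2^(-(d+α)/3)`, we have `a_j = f q^(|j|+1)` and `c_j = (2^α)^|j|`, so at a node of
length `n` both sides of the balance equation equal `f² q^(2n) (2^α)^n`, the right one times the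
factor `2^d 2^α q³ = 1`. The constant solution then has zero derivative, and `a_j²` is
`(f q)² (q²)^|j|`: summing over the `2^(dn)` words of length `n` gives a geometric series of ratio
`2^d q² = 2^((d-2α)/3) < 1`. -/

open Set

namespace Stmt17

/-- Nodes of the `2^d`-ary tree: finite words over an alphabet with `2^d` letters.
The root is the empty word, the parent of `a :: j` is `j`, and the children of `j`
are the words `a :: j` for `a : Fin (2^d)`. -/
abbrev Word (d : ℕ) := List (Fin (2 ^ d))

/-- The coefficient `c_j = 2^(α |j|)`. -/
noncomputable def coef (α : ℝ) {d : ℕ} (j : Word d) : ℝ := (2 : ℝ) ^ (α * (j.length : ℝ))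

/-- The value at the parent node, with the convention that the (fictitious) parent of the
root carries the forcing value `f`. -/
def parentVal {d : ℕ} (f : ℝ) (X : Word d → ℝ) : Word d → ℝ
  | [] => f
  | _ :: j => X j

/-- The candidate constant solution `a_j = f·2^(−(d+α)(|j|+1)/3)` of the forced inviscid
KP tree model. -/
noncomputable def aKP (d : ℕ) (α f : ℝ) (j : Word d) : ℝ :=
  f * (2 : ℝ) ^ (-(((d : ℝ) + α) * ((j.length : ℝ) + 1)) / 3)

lemma summable_pow_length {ι : Type*} [Fintype ι] {ρ : ℝ} (hρ : 0 ≤ ρ)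
    (h : Fintype.card ι * ρ < 1) : Summable fun l : List ι => ρ ^ l.length := by
  refine (List.equivSigmaTuple.summable_iff (f := fun s : Σ n, Fin n → ι => ρ ^ s.1)).2 ?_
  rw [summable_sigma_of_nonneg fun _ => pow_nonneg hρ _]
  refine ⟨fun _ => Summable.of_finite, ?_⟩
  have hlevel : ∀ n : ℕ, ∑' _ : Fin n → ι, ρ ^ n = (Fintype.card ι * ρ) ^ n := by
    intro n
    rw [tsum_fintype, Finset.sum_const, Finset.card_univ, Fintype.card_fun, Fintype.card_fin,
      nsmul_eq_mul, mul_pow, Nat.cast_pow]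
  simpa only [hlevel] using summable_geometric_of_lt_one (by positivity) h

lemma geometric_balance (m f l q : ℝ) (h : m * l * q ^ 3 = 1) (n : ℕ) :
    l ^ n * (f * q ^ n) ^ 2 = f * q ^ (n + 1) * (m * (l ^ (n + 1) * (f * q ^ (n + 2)))) := by
  linear_combination (-(f ^ 2 * q ^ (2 * n) * l ^ n)) * h

section

variable {d : ℕ} (α f : ℝ)

lemma coef_eq_pow (j : Word d) : coef α j = ((2 : ℝ) ^ α) ^ j.length :=
  Real.rpow_mul_natCast zero_le_two α _

lemma aKP_eq_mul_pow (j : Word d) :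
    aKP d α f j = f * ((2 : ℝ) ^ (-((d : ℝ) + α) / 3)) ^ (j.length + 1) := by
  rw [aKP, ← Real.rpow_mul_natCast zero_le_two]
  congr 2
  push_cast
  ring

lemma parentVal_aKP (j : Word d) :
    parentVal f (aKP d α f) j = f * ((2 : ℝ) ^ (-((d : ℝ) + α) / 3)) ^ j.length := by
  cases j with
  | nil => simp [parentVal]
  | cons _ j => rw [parentVal, aKP_eq_mul_pow, List.length_cons]

lemma two_pow_mul_two_rpow_mul_cube :
    (2 : ℝ) ^ d * (2 : ℝ) ^ α * ((2 : ℝ) ^ (-((d : ℝ) + α) / 3)) ^ 3 = 1 := by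
  rw [← Real.rpow_natCast, ← Real.rpow_add two_pos, ← Real.rpow_mul_natCast zero_le_two,
    ← Real.rpow_add two_pos]
  norm_num

theorem aKP_balance (j : Word d) :
    coef α j * (parentVal f (aKP d α f) j) ^ 2
      = aKP d α f j * ∑ a : Fin (2 ^ d), coef α (a :: j) * aKP d α f (a :: j) := by
  simp only [Finset.sum_const, Finset.card_univ, Fintype.card_fin, nsmul_eq_mul, Nat.cast_pow,
    Nat.cast_ofNat, parentVal_aKP, coef_eq_pow, aKP_eq_mul_pow, List.length_cons]
  exact geometric_balance _ f _ _ (two_pow_mul_two_rpow_mul_cube α) j.length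

variable {α}

theorem summable_aKP_sq (hα : (d : ℝ) / 2 < α) :
    Summable fun j : Word d => (aKP d α f j) ^ 2 := by
  set q : ℝ := (2 : ℝ) ^ (-((d : ℝ) + α) / 3)
  have hratio : Fintype.card (Fin (2 ^ d)) * q ^ 2 < 1 := by
    rw [Fintype.card_fin, Nat.cast_pow, Nat.cast_ofNat, ← Real.rpow_natCast, ← Real.rpow_natCast,
      ← Real.rpow_mul zero_le_two, ← Real.rpow_add two_pos]
    exact Real.rpow_lt_one_of_one_lt_of_neg one_lt_two (by push_cast; linarith)
  refine ((summable_pow_length (sq_nonneg q) hratio).mul_left ((f * q) ^ 2)).congr fun j => ?_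
  rw [aKP_eq_mul_pow]
  ring

end

theorem kp_constant_solution_general (d : ℕ) (α f : ℝ) (hα : (d : ℝ) / 2 < α) :
    (Summable fun j : Word d => (aKP d α f j) ^ 2) ∧
    (∀ j : Word d,
      coef α j * (parentVal f (aKP d α f) j) ^ 2
        = aKP d α f j * ∑ a : Fin (2 ^ d), coef α (a :: j) * aKP d α f (a :: j)) ∧
    (∀ j : Word d, ∀ t ∈ Ici (0 : ℝ),
      HasDerivWithinAt (fun _ : ℝ => aKP d α f j)
        (coef α j * (parentVal f (aKP d α f) j) ^ 2
          - aKP d α f j * ∑ a : Fin (2 ^ d), coef α (a :: j) * aKP d α f (a :: j))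
        (Ici 0) t) ∧
    (∃ M : ℝ, ∀ t ∈ Ici (0 : ℝ), (∑' j : Word d, (aKP d α f j) ^ 2) ≤ M) := by
  refine ⟨summable_aKP_sq f hα, aKP_balance α f, fun j t _ => ?_, ⟨_, fun _ _ => le_rfl⟩⟩
  rw [sub_eq_zero_of_eq (aKP_balance α f j)]
  exact hasDerivWithinAt_const t _ _

/-- Fix `d ≥ 1`, `α > d/2`, `f > 0` and set `a_j = f·2^(−(d+α)(|j|+1)/3)`.
Then `Σ_{j∈J} a_j² < ∞` and `c_j a_ȷ̄² = a_j Σ_{k∈O_j} c_k a_k` for every `j` (with the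
root convention `a_{∅̄} = f`); consequently the constant functions `X_j(t) ≡ a_j` form a
Leray solution of the forced inviscid KP tree model with forcing `f`. -/
theorem kp_constant_solution (d : ℕ) (hd : 1 ≤ d) (α f : ℝ) (hα : (d : ℝ) / 2 < α)
    (hf : 0 < f) :
    (Summable fun j : Word d => (aKP d α f j) ^ 2) ∧
    (∀ j : Word d,
      coef α j * (parentVal f (aKP d α f) j) ^ 2
        = aKP d α f j * ∑ a : Fin (2 ^ d), coef α (a :: j) * aKP d α f (a :: j)) ∧
    (∀ j : Word d, ∀ t ∈ Ici (0 : ℝ),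
      HasDerivWithinAt (fun _ : ℝ => aKP d α f j)
        (coef α j * (parentVal f (aKP d α f) j) ^ 2
          - aKP d α f j * ∑ a : Fin (2 ^ d), coef α (a :: j) * aKP d α f (a :: j))
        (Ici 0) t) ∧
    (∃ M : ℝ, ∀ t ∈ Ici (0 : ℝ), (∑' j : Word d, (aKP d α f j) ^ 2) ≤ M) :=
  kp_constant_solution_general d α f hα

end Stmt17
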